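/- In the setting of the preceding hybrid-coordinate lower bound, suppose additionally E_l = ℝ^{d_l}, that A_l are real d_l×d_l matrices, t ≥ 0, and a_l = exp(−t A_l) u_l and b_l = exp(−t A_l) v_l for vectors u_l, v_l ∈ ℝ^{d_l}. Then ‖H(a) − H(b)‖² ≥ (1 − ρ(L − 1)) · e^{−2t·max_l ‖A_l‖} · ∑_{l=1}^L η_l ‖u_l − v_l‖². -/

import Mathlib

/-!
The difference `H a − H b` telescopes along the hybrid points into the increments
`Δ_l = H(w_{l+1}) − H(w_l)`. Expanding `‖∑ Δ_l‖²`, the cross terms are at least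
`−ρ ∑_{l ≠ k} ‖Δ_l‖‖Δ_k‖ ≥ −ρ (L − 1) ∑ ‖Δ_l‖²` by Cauchy–Schwarz in `ℝ^L`. Since `w_{l+1}`
and `w_l` differ only in coordinate `l`, coercivity gives `‖Δ_l‖² ≥ η_l ‖a_l − b_l‖²`. Finally
`u_l − v_l = exp(t A_l) (a_l − b_l)` and `‖exp X‖ ≤ e^{‖X‖}`, so
`‖a_l − b_l‖ ≥ e^{−t ‖A_l‖} ‖u_l − v_l‖`.
-/

open Matrix
open scoped Matrix.Norms.L2Operator

/-- The hybrid point `w_l`: its first `l` coordinates are taken from `a` and the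
remaining ones from `b` (so `hybrid a b 0 = b` and `hybrid a b L = a`). -/
def hybrid {L : ℕ} {E : Fin L → Type*} (a b : ∀ l, E l) (l : ℕ) : ∀ k, E k :=
  fun k => if (k : ℕ) < l then a k else b k

open Finset

theorem norm_exp_le_exp_norm_of_norm_one_le {𝔸 : Type*} [NormedRing 𝔸] [NormedAlgebra ℝ 𝔸]
    (h1 : ‖(1 : 𝔸)‖ ≤ 1) (x : 𝔸) : ‖NormedSpace.exp x‖ ≤ Real.exp ‖x‖ := by
  have hterm (k : ℕ) : ‖(k.factorial⁻¹ : ℝ) • x ^ k‖ ≤ ‖x‖ ^ k / k.factorial := by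
    rw [norm_smul, norm_inv, Real.norm_natCast, inv_mul_eq_div]
    gcongr
    rcases k.eq_zero_or_pos with rfl | hk
    · simpa using h1
    · exact norm_pow_le' x hk
  rw [NormedSpace.exp_eq_tsum (𝕂 := ℝ), Real.exp_eq_exp_ℝ, NormedSpace.exp_eq_tsum_div]
  have hsum := NormedSpace.norm_expSeries_summable' (𝕂 := ℝ) x
  exact (norm_tsum_le_tsum_norm hsum).trans
    (hsum.tsum_le_tsum hterm (Real.summable_pow_div_factorial ‖x‖))

namespace Matrix

variable {n : Type*} [Fintype n] [DecidableEq n]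

-- Only `≤`: for empty `n` the identity matrix has norm `0`, so there is no `NormOneClass`.
theorem l2_opNorm_one_le : ‖(1 : Matrix n n ℝ)‖ ≤ 1 := by
  rw [cstar_norm_def, map_one]
  exact ContinuousLinearMap.norm_id_le

theorem exp_neg_norm_mul_norm_le_norm_exp_mulVec (X : Matrix n n ℝ) (w : EuclideanSpace ℝ n) :
    Real.exp (-‖X‖) * ‖w‖ ≤ ‖(EuclideanSpace.equiv n ℝ).symm (NormedSpace.exp X *ᵥ w)‖ := by
  set y := (EuclideanSpace.equiv n ℝ).symm (NormedSpace.exp X *ᵥ w)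
  have hw : w = (EuclideanSpace.equiv n ℝ).symm (NormedSpace.exp (-X) *ᵥ y) := by
    change w = (EuclideanSpace.equiv n ℝ).symm (NormedSpace.exp (-X) *ᵥ NormedSpace.exp X *ᵥ w)
    rw [mulVec_mulVec, ← exp_add_of_commute _ _ (Commute.refl X).neg_left, neg_add_cancel,
      NormedSpace.exp_zero, one_mulVec]
    rfl
  have hnorm : ‖w‖ ≤ Real.exp ‖X‖ * ‖y‖ := calc
    ‖w‖ ≤ ‖NormedSpace.exp (-X)‖ * ‖y‖ := hw ▸ l2_opNorm_mulVec _ y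
    _ ≤ Real.exp ‖X‖ * ‖y‖ := by
      gcongr
      simpa using norm_exp_le_exp_norm_of_norm_one_le l2_opNorm_one_le (-X)
  rwa [Real.exp_neg, inv_mul_le_iff₀ (Real.exp_pos _)]

theorem exp_mul_norm_sq_le_norm_exp_neg_smul_mulVec_sq (A : Matrix n n ℝ) {t M : ℝ}
    (ht : 0 ≤ t) (hA : ‖A‖ ≤ M) (w : EuclideanSpace ℝ n) :
    Real.exp (-2 * t * M) * ‖w‖ ^ 2 ≤
      ‖(EuclideanSpace.equiv n ℝ).symm (NormedSpace.exp (-t • A) *ᵥ w)‖ ^ 2 := by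
  have hlow : Real.exp (-(t * M)) * ‖w‖ ≤
      ‖(EuclideanSpace.equiv n ℝ).symm (NormedSpace.exp (-t • A) *ᵥ w)‖ := by
    refine le_trans ?_ (exp_neg_norm_mul_norm_le_norm_exp_mulVec _ w)
    rw [norm_smul, norm_neg, Real.norm_of_nonneg ht]
    gcongr
  calc Real.exp (-2 * t * M) * ‖w‖ ^ 2 = (Real.exp (-(t * M)) * ‖w‖) ^ 2 := by
        rw [mul_pow, ← Real.exp_nat_mul]; ring_nf
    _ ≤ _ := by gcongr

end Matrix

section OffDiagonal

variable {ι : Type*} [Fintype ι] [DecidableEq ι]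

theorem sum_sum_erase_mul_le (f : ι → ℝ) :
    ∑ i, ∑ j ∈ univ.erase i, f i * f j ≤ (Fintype.card ι - 1) * ∑ i, f i ^ 2 := by
  have hoff : ∑ i, ∑ j ∈ univ.erase i, f i * f j = (∑ i, f i) ^ 2 - ∑ i, f i ^ 2 := by
    simp only [← mul_sum, sum_erase_eq_sub (mem_univ _), sq, sum_mul, ← sum_sub_distrib]
  have hcs : (∑ i, f i) ^ 2 ≤ Fintype.card ι * ∑ i, f i ^ 2 := sq_sum_le_card_mul_sum_sq
  linarith

variable {F : Type*} [NormedAddCommGroup F] [InnerProductSpace ℝ F]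

theorem norm_sum_sq_eq_sum_norm_sq_add_sum_sum_erase_inner (x : ι → F) :
    ‖∑ i, x i‖ ^ 2 = ∑ i, ‖x i‖ ^ 2 + ∑ i, ∑ j ∈ univ.erase i, inner ℝ (x i) (x j) := by
  rw [← real_inner_self_eq_norm_sq, sum_inner, ← sum_add_distrib]
  refine sum_congr rfl fun i _ => ?_
  rw [inner_sum, ← add_sum_erase _ _ (mem_univ i), real_inner_self_eq_norm_sq]

theorem one_sub_mul_sum_norm_sq_le_norm_sum_sq {ρ : ℝ} (hρ : 0 ≤ ρ) (x : ι → F)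
    (hx : ∀ i j, i ≠ j → -(ρ * ‖x i‖ * ‖x j‖) ≤ inner ℝ (x i) (x j)) :
    (1 - ρ * (Fintype.card ι - 1)) * ∑ i, ‖x i‖ ^ 2 ≤ ‖∑ i, x i‖ ^ 2 := by
  have hcross : -(ρ * ((Fintype.card ι - 1) * ∑ i, ‖x i‖ ^ 2)) ≤
      ∑ i, ∑ j ∈ univ.erase i, inner ℝ (x i) (x j) := calc
    _ ≤ -(ρ * ∑ i, ∑ j ∈ univ.erase i, ‖x i‖ * ‖x j‖) := by
      gcongr; exact sum_sum_erase_mul_le _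
    _ = ∑ i, ∑ j ∈ univ.erase i, -(ρ * ‖x i‖ * ‖x j‖) := by
      simp only [mul_sum, ← sum_neg_distrib, mul_assoc]
    _ ≤ _ := sum_le_sum fun i _ => sum_le_sum fun j hj => hx i j (ne_of_mem_erase hj).symm
  rw [norm_sum_sq_eq_sum_norm_sq_add_sum_sum_erase_inner]
  linarith

end OffDiagonal

theorem mul_le_of_le_of_mul_le {c s S X : ℝ} (hs : 0 ≤ s) (hX : 0 ≤ X) (hsS : s ≤ S)
    (h : c * S ≤ X) : c * s ≤ X := by
  rcases le_total c 0 with hc | hc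
  · exact (mul_nonpos_of_nonpos_of_nonneg hc hs).trans hX
  · exact (mul_le_mul_of_nonneg_left hsS hc).trans h

section Hybrid

variable {L : ℕ} {E : Fin L → Type*} (a b : ∀ l, E l)

theorem hybrid_zero : hybrid a b 0 = b := by
  funext k; simp [hybrid]

theorem hybrid_length : hybrid a b L = a := by
  funext k; simp [hybrid, k.isLt]

theorem hybrid_apply_self (l : Fin L) : hybrid a b l l = b l := by
  simp [hybrid]

theorem hybrid_succ_apply_self (l : Fin L) : hybrid a b (l + 1) l = a l := by
  simp [hybrid]

theorem hybrid_succ_apply_of_ne {l k : Fin L} (h : k ≠ l) :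
    hybrid a b (l + 1) k = hybrid a b l k := by
  have : (k : ℕ) < l + 1 ↔ (k : ℕ) < l := by omega
  simp only [hybrid, this]

theorem sum_hybrid_succ_sub {G : Type*} [AddCommGroup G] (f : (∀ k, E k) → G) :
    ∑ l : Fin L, (f (hybrid a b (l + 1)) - f (hybrid a b l)) = f a - f b := by
  rw [Fin.sum_univ_eq_sum_range (fun l => f (hybrid a b (l + 1)) - f (hybrid a b l)),
    sum_range_sub (fun l => f (hybrid a b l)), hybrid_length, hybrid_zero]

end Hybrid

def CoordinatewiseCoercive {ι : Type*} {E : ι → Type*} [∀ l, NormedAddCommGroup (E l)]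
    {F : Type*} [NormedAddCommGroup F] (H : (∀ l, E l) → F) (η : ι → ℝ) : Prop :=
  ∀ l (u v : ∀ k, E k), (∀ k, k ≠ l → u k = v k) → η l * ‖u l - v l‖ ^ 2 ≤ ‖H u - H v‖ ^ 2

section HybridLowerBound

variable {L : ℕ} {E : Fin L → Type*} [∀ l, NormedAddCommGroup (E l)]
  {F : Type*} [NormedAddCommGroup F] {H : (∀ l, E l) → F} {η : Fin L → ℝ} (a b : ∀ l, E l)

theorem CoordinatewiseCoercive.le_norm_hybrid_succ_sub_sq (hH : CoordinatewiseCoercive H η)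
    (l : Fin L) :
    η l * ‖a l - b l‖ ^ 2 ≤ ‖H (hybrid a b (l + 1)) - H (hybrid a b l)‖ ^ 2 := by
  simpa only [hybrid_succ_apply_self, hybrid_apply_self] using
    hH l _ _ fun k hk => hybrid_succ_apply_of_ne a b hk

theorem CoordinatewiseCoercive.hybrid_lower_bound [InnerProductSpace ℝ F]
    (hH : CoordinatewiseCoercive H η) (hη : ∀ l, 0 ≤ η l) {ρ : ℝ} (hρ : 0 ≤ ρ)
    (hcross : ∀ l k : Fin L, l ≠ k →
      -(ρ * ‖H (hybrid a b (l + 1)) - H (hybrid a b l)‖ *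
          ‖H (hybrid a b (k + 1)) - H (hybrid a b k)‖) ≤
        inner ℝ (H (hybrid a b (l + 1)) - H (hybrid a b l))
          (H (hybrid a b (k + 1)) - H (hybrid a b k))) :
    (1 - ρ * (L - 1)) * ∑ l, η l * ‖a l - b l‖ ^ 2 ≤ ‖H a - H b‖ ^ 2 := by
  have hinc := one_sub_mul_sum_norm_sq_le_norm_sum_sq hρ _ hcross
  rw [Fintype.card_fin, sum_hybrid_succ_sub] at hinc
  refine mul_le_of_le_of_mul_le (sum_nonneg fun l _ => ?_) (sq_nonneg _)
    (sum_le_sum fun l _ => hH.le_norm_hybrid_succ_sub_sq a b l) hinc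
  exact mul_nonneg (hη l) (sq_nonneg _)

end HybridLowerBound

/-- Hybrid-coordinate lower bound through Koopman flows: with `a_l = exp(−t A_l) *ᵥ u_l`
and `b_l = exp(−t A_l) *ᵥ v_l`, coordinatewise coercivity of `H` with constants `η_l ≥ 0`,
and increments along the hybrid sequence having pairwise inner products
`≥ −ρ` times the product of their norms (`ρ ≥ 0`), one has
`‖H(a) − H(b)‖² ≥ (1 − ρ(L − 1)) e^{−2t·max_l ‖A_l‖} ∑_l η_l ‖u_l − v_l‖²`. -/
theorem hybrid_coercivity_koopman_lower_bound (L : ℕ) (d : Fin L → ℕ)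
    {F : Type*} [NormedAddCommGroup F] [InnerProductSpace ℝ F]
    (H : (∀ l, EuclideanSpace ℝ (Fin (d l))) → F)
    (A : ∀ l, Matrix (Fin (d l)) (Fin (d l)) ℝ) (t : ℝ) (ht : 0 ≤ t)
    (u v a b : ∀ l, EuclideanSpace ℝ (Fin (d l)))
    (ha : ∀ l, a l =
      (EuclideanSpace.equiv (Fin (d l)) ℝ).symm ((NormedSpace.exp (-t • A l)) *ᵥ u l))
    (hb : ∀ l, b l =
      (EuclideanSpace.equiv (Fin (d l)) ℝ).symm ((NormedSpace.exp (-t • A l)) *ᵥ v l))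
    (η : Fin L → ℝ) (hη : ∀ l, 0 ≤ η l) (ρ : ℝ) (hρ : 0 ≤ ρ)
    (hcoer : ∀ (l : Fin L) (u' v' : ∀ k, EuclideanSpace ℝ (Fin (d k))),
      (∀ k : Fin L, k ≠ l → u' k = v' k) →
      ‖H u' - H v'‖ ^ 2 ≥ η l * ‖u' l - v' l‖ ^ 2)
    (hcross : ∀ l k : Fin L, l ≠ k →
      (inner ℝ (H (hybrid a b ((l : ℕ) + 1)) - H (hybrid a b (l : ℕ)))
          (H (hybrid a b ((k : ℕ) + 1)) - H (hybrid a b (k : ℕ))) : ℝ) ≥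
        -(ρ * ‖H (hybrid a b ((l : ℕ) + 1)) - H (hybrid a b (l : ℕ))‖ *
            ‖H (hybrid a b ((k : ℕ) + 1)) - H (hybrid a b (k : ℕ))‖)) :
    ‖H a - H b‖ ^ 2 ≥
      (1 - ρ * ((L : ℝ) - 1)) * Real.exp (-2 * t * ⨆ l, ‖A l‖) *
        ∑ l, η l * ‖u l - v l‖ ^ 2 := by
  set M := ⨆ l, ‖A l‖
  have hAM (l : Fin L) : ‖A l‖ ≤ M := le_ciSup (f := fun l => ‖A l‖) (Set.finite_range _).bddAbove l
  have hflow (l : Fin L) : Real.exp (-2 * t * M) * ‖u l - v l‖ ^ 2 ≤ ‖a l - b l‖ ^ 2 := by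
    rw [ha, hb, ← map_sub, ← mulVec_sub]
    exact exp_mul_norm_sq_le_norm_exp_neg_smul_mulVec_sq (A l) ht (hAM l) _
  have hsum : Real.exp (-2 * t * M) * ∑ l, η l * ‖u l - v l‖ ^ 2 ≤
      ∑ l, η l * ‖a l - b l‖ ^ 2 := by
    rw [mul_sum]
    exact sum_le_sum fun l _ => by
      rw [mul_left_comm]
      exact mul_le_mul_of_nonneg_left (hflow l) (hη l)
  have hsum_nonneg : 0 ≤ ∑ l, η l * ‖u l - v l‖ ^ 2 :=
    sum_nonneg fun l _ => mul_nonneg (hη l) (sq_nonneg _)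
  rw [mul_assoc]
  exact mul_le_of_le_of_mul_le (by positivity) (sq_nonneg _) hsum
    (CoordinatewiseCoercive.hybrid_lower_bound a b hcoer hη hρ hcross)
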